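/- arXiv:1709.01124 — 3 statements merged into one kernel-verified Lean document; each statement's English description precedes it below -/
import Mathlib

section
/- Let (x*,y*,a*,w*,z*,R*) be a feasible integer solution to the tree-based formulation IPet and let P be an s–t path in the induced graph F_{x*,y*} with s ≠ t. If z*_{sk} = 1 and z*_{tℓ} = 1 for some indices k < ℓ, then w*_{kℓ} = 1. -/
open Finset
open scoped Classical

noncomputable section

variable {V : Type} [Fintype V] [DecidableEq V]

/-- A feasible integer solution of the tree-based formulation `IPet`. -/
def IPetFeasible (G : SimpleGraph V) {K : ℕ} (T : Fin K → Finset V) (r : Fin K → V)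
    (x : Sym2 V → ℝ) (y : V → ℝ) (w : Fin K → Fin K → ℝ)
    (z : V → Fin K → ℝ) (a : Fin K → ℝ) (R : ℕ) : Prop :=
  -- integrality and ranges
  (∀ e ∈ G.edgeSet, x e = 0 ∨ x e = 1) ∧
  (∀ i : V, y i = 0 ∨ y i = 1) ∧
  (∀ k l : Fin K, k < l → (w k l = 0 ∨ w k l = 1)) ∧
  (∀ (i : V) (k : Fin K), z i k = 0 ∨ z i k = 1) ∧
  (∀ k : Fin K, a k = 0 ∨ a k = 1) ∧
  (1 ≤ R ∧ R ≤ K) ∧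
  -- (1)  y(V) − x(E) = R
  ((∑ i : V, y i) - (∑ e ∈ G.edgeFinset, x e) = (R : ℝ)) ∧
  -- (2)  y(S) − x(E[S]) ≥ y_i for all S ⊆ V and i ∈ S
  (∀ S : Finset V, ∀ i ∈ S,
    y i ≤ (∑ j ∈ S, y j) -
      (∑ e ∈ G.edgeFinset.filter (fun e => ∀ v ∈ e, v ∈ S), x e)) ∧
  -- (3)  Σ_k a_k = R
  ((∑ k : Fin K, a k) = (R : ℝ)) ∧
  -- (4)  a_k ≤ 1 − w_{kℓ} for k < ℓ
  (∀ k l : Fin K, k < l → a k ≤ 1 - w k l) ∧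
  -- (5)  coupling of x, z and w
  (∀ i j : V, G.Adj i j → ∀ k l : Fin K, k < l →
    x s(i, j) - (1 - z i k) - (1 - z j l) ≤ w k l ∧
    x s(i, j) - (1 - z i l) - (1 - z j k) ≤ w k l) ∧
  -- (6)  x_{ij} + z_{jk} − 1 ≥ z_{ik} and x_{ij} + z_{ik} − 1 ≥ z_{jk}
  (∀ i j : V, G.Adj i j → ∀ k : Fin K,
    z i k ≤ x s(i, j) + z j k - 1 ∧ z j k ≤ x s(i, j) + z i k - 1) ∧
  -- (7)  transitivity of w
  (∀ k l m : Fin K, k < l → l < m →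
    w k l + w l m - 1 ≤ w k m ∧
    w k m + w l m - 1 ≤ w k l ∧
    w k l + w k m - 1 ≤ w l m) ∧
  -- (8)  fixings for terminals
  (∀ k : Fin K, ∀ i ∈ T k, z i k = 1 ∧ y i = 1)

/-- The graph `F_{x,y}` induced by an `IPet` solution: its vertices are the
nodes `i` with `y i = 1`, and two of them are adjacent iff they are adjacent
in `G` and the corresponding edge has `x`-value one. -/
def inducedF (G : SimpleGraph V) (x : Sym2 V → ℝ) (y : V → ℝ) :
    SimpleGraph {i : V // y i = 1} where
  Adj p q := G.Adj p.1 q.1 ∧ x s(p.1, q.1) = 1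
  symm := by
    constructor
    intro p q h
    exact ⟨h.1.symm, by rw [Sym2.eq_swap]; exact h.2⟩
  loopless := by
    constructor
    intro p h
    exact G.loopless.irrefl p.1 h.1

/-- If the induced graph `F_{x,y}` of a feasible integer IPet
solution contains an `s`-`t`-path with `s ≠ t`, `z s k = 1` and `z t ℓ = 1` for
some `k < ℓ`, then `w k ℓ = 1`. -/
theorem w_eq_one_of_path (G : SimpleGraph V) {K : ℕ}
    (T : Fin K → Finset V) (r : Fin K → V)
    (hroot : ∀ k, r k ∈ T k)
    (hdisj : ∀ k l : Fin K, k ≠ l → Disjoint (T k) (T l))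
    (x : Sym2 V → ℝ) (y : V → ℝ) (w : Fin K → Fin K → ℝ)
    (z : V → Fin K → ℝ) (a : Fin K → ℝ) (R : ℕ)
    (hfeas : IPetFeasible G T r x y w z a R) :
    ∀ (s t : {i : V // y i = 1}) (p : (inducedF G x y).Walk s t), p.IsPath →
      s ≠ t → ∀ k l : Fin K, k < l → z s.1 k = 1 → z t.1 l = 1 →
        w k l = 1 := by
  intro s t p hp hst k l hkl hzs hzt
  obtain ⟨hx01, hy01, hw01, hz01, ha01, hR, h1, h2, h3, h4, h5, h6, h7, h8⟩ := hfeas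
  -- propagation of z along walks in F
  have prop : ∀ (u v : {i : V // y i = 1}) (q : (inducedF G x y).Walk u v)
      (m : Fin K), z u.1 m = 1 → z v.1 m = 1 := by
    intro u v q
    induction q with
    | nil => intro m h; exact h
    | @cons u' v' w' h q ih =>
      intro m hm
      apply ih
      have h6' := (h6 u'.1 v'.1 h.1 m).1
      rw [h.2, hm] at h6'
      rcases hz01 v'.1 m with h0 | h1'
      · rw [h0] at h6'; linarith
      · exact h1'
  -- the walk is nonempty since s ≠ t
  cases p with
  | nil => exact absurd rfl hst
  | cons h q =>
    rename_i v
    -- z v k = 1 from the first edge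
    have hzv : z v.1 k = 1 := by
      have h6' := (h6 s.1 v.1 h.1 k).1
      rw [h.2, hzs] at h6'
      rcases hz01 v.1 k with h0 | h1'
      · rw [h0] at h6'; linarith
      · exact h1'
    -- z s l = 1 by propagating backwards from t
    have hzsl : z s.1 l = 1 := by
      have h6' := (h6 s.1 v.1 h.1 l).2
      have hzvl : z v.1 l = 1 := prop t v q.reverse l hzt
      rw [h.2, hzvl] at h6'
      rcases hz01 s.1 l with h0 | h1'
      · rw [h0] at h6'; linarith
      · exact h1'
    -- apply constraint (5) to edge {v, s}
    have h5' := (h5 v.1 s.1 h.1.symm k l hkl).1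
    have hxvs : x s(v.1, s.1) = 1 := by rw [Sym2.eq_swap]; exact h.2
    rw [hxvs, hzv, hzsl] at h5'
    rcases hw01 k l hkl with h0 | h1'
    · rw [h0] at h5'; linarith
    · exact h1'
end
end

section
/- Let (x*,y*,a*,w*,z*,R*) be a feasible integer solution to the tree-based formulation IPet and let F be a connected component of the induced graph F_{x*,y*}. If F contains a terminal node t ∈ T^k for some k ∈ [K], then F also contains the root r^k. -/
open Finset
open scoped Classical

noncomputable section

variable {V : Type} [Fintype V] [DecidableEq V]

/-- If a connected component of the induced graph `F_{x,y}` of a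
feasible integer IPet solution contains a terminal `t ∈ T k`, then it also
contains the root `r k`. -/
theorem component_contains_root (G : SimpleGraph V) {K : ℕ}
    (T : Fin K → Finset V) (r : Fin K → V)
    (hroot : ∀ k, r k ∈ T k)
    (hdisj : ∀ k l : Fin K, k ≠ l → Disjoint (T k) (T l))
    (x : Sym2 V → ℝ) (y : V → ℝ) (w : Fin K → Fin K → ℝ)
    (z : V → Fin K → ℝ) (a : Fin K → ℝ) (R : ℕ)
    (hfeas : IPetFeasible G T r x y w z a R) :
    ∀ C : (inducedF G x y).ConnectedComponent, ∀ k : Fin K, ∀ t ∈ T k,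
      ∀ ht : y t = 1, (inducedF G x y).connectedComponentMk ⟨t, ht⟩ = C →
        ∃ hr : y (r k) = 1,
          (inducedF G x y).connectedComponentMk ⟨r k, hr⟩ = C := by
  obtain ⟨hx01, hy01, hw01, hz01, ha01, ⟨hR1, hRK⟩, h1, h2, h3, h4, h5, h6, h7, h8⟩ := hfeas
  set F := inducedF G x y with hFdef
  intro C k t htT ht htC
  have hK : 0 < K := lt_of_lt_of_le hR1 hRK
  -- every edge of G has x-value 1
  have hx1 : ∀ i j : V, G.Adj i j → x s(i, j) = 1 := by
    intro i j hij
    have h := h6 i j hij ⟨0, hK⟩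
    rcases hx01 s(i, j) (by simpa [SimpleGraph.mem_edgeSet] using hij) with h0 | h1'
    · rw [h0] at h; linarith [h.1, h.2]
    · exact h1'
  have hx1e : ∀ e ∈ G.edgeFinset, x e = 1 := by
    intro e he
    induction e using Sym2.inductionOn with
    | hf i j =>
      exact hx1 i j (by simpa [SimpleGraph.mem_edgeFinset, SimpleGraph.mem_edgeSet] using he)
  -- every endpoint of an edge of G has y-value 1
  have hy1 : ∀ i j : V, G.Adj i j → y j = 1 := by
    intro i j hij
    have h := h2 {i, j} i (by simp)
    have hne : i ≠ j := hij.ne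
    have hsum : ∑ u ∈ ({i, j} : Finset V), y u = y i + y j := Finset.sum_pair hne
    have hmem : s(i, j) ∈ G.edgeFinset.filter (fun e => ∀ v ∈ e, v ∈ ({i, j} : Finset V)) := by
      rw [Finset.mem_filter]
      refine ⟨by simpa [SimpleGraph.mem_edgeFinset, SimpleGraph.mem_edgeSet] using hij, ?_⟩
      intro v hv
      rcases Sym2.mem_iff.mp hv with h' | h' <;> simp [h']
    have hge : (1 : ℝ) ≤ ∑ e ∈ G.edgeFinset.filter
        (fun e => ∀ v ∈ e, v ∈ ({i, j} : Finset V)), x e := by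
      have hnn : ∀ e ∈ G.edgeFinset.filter
          (fun e => ∀ v ∈ e, v ∈ ({i, j} : Finset V)), (0 : ℝ) ≤ x e := by
        intro e he
        rw [hx1e e (Finset.mem_filter.mp he).1]; norm_num
      have := Finset.single_le_sum hnn hmem
      rwa [hx1 i j hij] at this
    rcases hy01 j with h0 | h1'
    · exfalso; rw [hsum, h0] at h; linarith
    · exact h1'
  -- z is constant along G-edges
  have hzadj : ∀ i j : V, G.Adj i j → ∀ m : Fin K, z i m = z j m := by
    intro i j hij m
    have h := h6 i j hij m
    rw [hx1 i j hij] at h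
    linarith [h.1, h.2]
  -- z is constant on connected components of F
  have hzreach : ∀ p q : {i : V // y i = 1}, F.Reachable p q →
      ∀ m : Fin K, z p.1 m = z q.1 m := by
    intro p q hpq m
    obtain ⟨wk⟩ := hpq
    induction wk with
    | nil => rfl
    | cons hadj _ ih => exact (hzadj _ _ hadj.1 m).trans ih
  have hstep : ∀ p q : {i : V // y i = 1}, F.Reachable p q → p ≠ q →
      ∃ p', F.Adj p p' := by
    intro p q hpq hne
    obtain ⟨wk⟩ := hpq
    cases wk with
    | nil => exact absurd rfl hne
    | cons hadj _ => exact ⟨_, hadj⟩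
  -- key: merged groups force w = 1
  have hkey : ∀ k1 k2 : Fin K, k1 < k2 → ∀ p q : {i : V // y i = 1},
      z p.1 k1 = 1 → z q.1 k2 = 1 →
      F.connectedComponentMk p = F.connectedComponentMk q → p ≠ q → 1 ≤ w k1 k2 := by
    intro k1 k2 hk12 p q hz1 hz2 hCeq hne
    have hr : F.Reachable p q := SimpleGraph.ConnectedComponent.exact hCeq
    obtain ⟨p', hadj⟩ := hstep p q hr hne
    have h := (h5 p.1 p'.1 hadj.1 k1 k2 hk12).1
    rw [hx1 p.1 p'.1 hadj.1, hz1, ← hzadj p.1 p'.1 hadj.1 k2,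
      hzreach p q hr k2, hz2] at h
    linarith
  -- the counting part: #components ≤ R
  have hyrk : ∀ k' : Fin K, y (r k') = 1 := fun k' => (h8 k' (r k') (hroot k')).2
  have hzrk : ∀ k' : Fin K, z (r k') k' = 1 := fun k' => (h8 k' (r k') (hroot k')).1
  classical
  set f : V → F.ConnectedComponent := fun i =>
    if h : y i = 1 then F.connectedComponentMk ⟨i, h⟩ else F.connectedComponentMk ⟨t, ht⟩
    with hfdef
  have hfval : ∀ (i : V) (h : y i = 1), f i = F.connectedComponentMk ⟨i, h⟩ := by
    intro i h; simp [hfdef, h]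
  set Sy : Finset V := univ.filter (fun i => y i = 1) with hSydef
  set VC : F.ConnectedComponent → Finset V := fun Cc => Sy.filter (fun i => f i = Cc) with hVCdef
  set EC : F.ConnectedComponent → Finset (Sym2 V) := fun Cc =>
    G.edgeFinset.filter (fun e => ∀ v ∈ e, v ∈ VC Cc) with hECdef
  have hySum : ∑ i : V, y i = (Sy.card : ℝ) := by
    rw [← Finset.sum_filter_add_sum_filter_not univ (fun i => y i = 1) y]
    have hA : ∑ i ∈ univ.filter (fun i => y i = 1), y i
        = ((univ.filter (fun i => y i = 1)).card : ℝ) := by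
      rw [Finset.sum_congr rfl (fun i hi => (Finset.mem_filter.mp hi).2)]
      simp
    have hB : ∑ i ∈ univ.filter (fun i => ¬ y i = 1), y i = 0 := by
      refine Finset.sum_eq_zero fun i hi => ?_
      rcases hy01 i with h0 | h1'
      · exact h0
      · exact absurd h1' (Finset.mem_filter.mp hi).2
    rw [hA, hB, add_zero, hSydef]
  have hxSum : ∑ e ∈ G.edgeFinset, x e = (G.edgeFinset.card : ℝ) := by
    rw [Finset.sum_congr rfl hx1e]; simp
  have hVCsum : Sy.card = ∑ Cc : F.ConnectedComponent, (VC Cc).card :=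
    Finset.card_eq_sum_card_fiberwise (fun i _ => Finset.mem_univ (f i))
  -- every edge of G lies in exactly one EC
  have hcover : Finset.univ.biUnion EC = G.edgeFinset := by
    apply Finset.Subset.antisymm
    · intro e he
      obtain ⟨Cc, _, hmem⟩ := Finset.mem_biUnion.mp he
      exact (Finset.mem_filter.mp hmem).1
    · intro e he
      induction e using Sym2.inductionOn with
      | hf i j =>
        have hij : G.Adj i j := by
          simpa [SimpleGraph.mem_edgeFinset, SimpleGraph.mem_edgeSet] using he
        have hyi : y i = 1 := hy1 j i hij.symm
        have hyj : y j = 1 := hy1 i j hij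
        have hadjF : F.Adj ⟨i, hyi⟩ ⟨j, hyj⟩ := ⟨hij, hx1 i j hij⟩
        have hfij : f i = f j := by
          rw [hfval i hyi, hfval j hyj]
          exact SimpleGraph.ConnectedComponent.connectedComponentMk_eq_of_adj hadjF
        refine Finset.mem_biUnion.mpr ⟨f i, Finset.mem_univ _, ?_⟩
        rw [hECdef]
        refine Finset.mem_filter.mpr ⟨he, ?_⟩
        intro v hv
        rcases Sym2.mem_iff.mp hv with h' | h' <;> subst h'
        · exact Finset.mem_filter.mpr ⟨Finset.mem_filter.mpr ⟨Finset.mem_univ _, hyi⟩, rfl⟩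
        · exact Finset.mem_filter.mpr ⟨Finset.mem_filter.mpr ⟨Finset.mem_univ _, hyj⟩, hfij.symm⟩
  have hECdisj : ∀ Cc ∈ (Finset.univ : Finset F.ConnectedComponent),
      ∀ Dc ∈ (Finset.univ : Finset F.ConnectedComponent), Cc ≠ Dc →
      Disjoint (EC Cc) (EC Dc) := by
    intro Cc _ Dc _ hCD
    rw [Finset.disjoint_left]
    intro e heC heD
    induction e using Sym2.inductionOn with
    | hf i j =>
      have hiC : i ∈ VC Cc := (Finset.mem_filter.mp heC).2 i (Sym2.mem_mk_left i j)
      have hiD : i ∈ VC Dc := (Finset.mem_filter.mp heD).2 i (Sym2.mem_mk_left i j)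
      exact hCD (((Finset.mem_filter.mp hiC).2).symm.trans ((Finset.mem_filter.mp hiD).2))
  have hECsum : G.edgeFinset.card = ∑ Cc : F.ConnectedComponent, (EC Cc).card := by
    rw [← hcover]; exact Finset.card_biUnion hECdisj
  -- each component is a tree: |VC| ≥ |EC| + 1
  have hCineq : ∀ Cc : F.ConnectedComponent, ((EC Cc).card : ℝ) + 1 ≤ (VC Cc).card := by
    intro Cc
    obtain ⟨p, hp⟩ := Cc.exists_rep
    have hpmem : p.1 ∈ VC Cc := by
      refine Finset.mem_filter.mpr ⟨Finset.mem_filter.mpr ⟨Finset.mem_univ _, p.2⟩, ?_⟩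
      rw [hfval p.1 p.2]
      exact (congrArg _ (Subtype.eta p _)).trans hp
    have h := h2 (VC Cc) p.1 hpmem
    have hA : ∑ j ∈ VC Cc, y j = ((VC Cc).card : ℝ) := by
      rw [Finset.sum_congr rfl
        (fun i hi => (Finset.mem_filter.mp (Finset.mem_filter.mp hi).1).2)]
      simp
      rfl
    have hB : ∑ e ∈ G.edgeFinset.filter (fun e => ∀ v ∈ e, v ∈ VC Cc), x e
        = ((EC Cc).card : ℝ) := by
      rw [Finset.sum_congr rfl (fun e he => hx1e e (Finset.mem_filter.mp he).1)]
      rw [hECdef]; simp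
    rw [p.2, hA, hB] at h
    linarith
  have hcomp_le : (Fintype.card F.ConnectedComponent : ℝ) ≤ (R : ℝ) := by
    have hsum : (R : ℝ) = ∑ Cc : F.ConnectedComponent, (((VC Cc).card : ℝ) - (EC Cc).card) := by
      rw [Finset.sum_sub_distrib, ← h1, hySum, hxSum, hVCsum, hECsum]
      push_cast
      ring
    have hge : ∑ Cc : F.ConnectedComponent, (((VC Cc).card : ℝ) - (EC Cc).card)
        ≥ ∑ _Cc : F.ConnectedComponent, (1 : ℝ) :=
      Finset.sum_le_sum (fun Cc _ => by linarith [hCineq Cc])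
    have : (∑ _Cc : F.ConnectedComponent, (1 : ℝ)) = Fintype.card F.ConnectedComponent := by
      simp
    linarith [hsum ▸ hge, this.symm ▸ hge]
  -- the set of selected groups has cardinality R
  set SA : Finset (Fin K) := univ.filter (fun k' => a k' = 1) with hSAdef
  have hSAcard : (SA.card : ℝ) = (R : ℝ) := by
    rw [← h3, ← Finset.sum_filter_add_sum_filter_not univ (fun k' => a k' = 1) a]
    have hA : ∑ k' ∈ univ.filter (fun k' => a k' = 1), a k'
        = ((univ.filter (fun k' => a k' = 1)).card : ℝ) := by
      rw [Finset.sum_congr rfl (fun k' hk' => (Finset.mem_filter.mp hk').2)]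
      simp
    have hB : ∑ k' ∈ univ.filter (fun k' => ¬ a k' = 1), a k' = 0 := by
      refine Finset.sum_eq_zero fun k' hk' => ?_
      rcases ha01 k' with h0 | h1'
      · exact h0
      · exact absurd h1' (Finset.mem_filter.mp hk').2
    rw [hA, hB, add_zero, hSAdef]
  -- the map sending each selected group to the component of its root
  set φ : Fin K → F.ConnectedComponent :=
    fun k' => F.connectedComponentMk ⟨r k', hyrk k'⟩ with hφdef
  have hroot_ne : ∀ k1 k2 : Fin K, k1 ≠ k2 → r k1 ≠ r k2 := by
    intro k1 k2 hne heq
    have := (hdisj k1 k2 hne).forall_ne_finset (hroot k1) (hroot k2)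
    exact this (heq ▸ rfl)
  have hinj : Set.InjOn φ SA := by
    intro k1 hk1 k2 hk2 heq
    by_contra hne
    have ha1 : a k1 = 1 := (Finset.mem_filter.mp (Finset.mem_coe.mp hk1)).2
    have ha2 : a k2 = 1 := (Finset.mem_filter.mp (Finset.mem_coe.mp hk2)).2
    have hpq : (⟨r k1, hyrk k1⟩ : {i : V // y i = 1}) ≠ ⟨r k2, hyrk k2⟩ := by
      intro h'
      exact hroot_ne k1 k2 hne (congrArg Subtype.val h')
    rcases lt_trichotomy k1 k2 with hlt | heqk | hgt
    · have hw := hkey k1 k2 hlt _ _ (hzrk k1) (hzrk k2) heq hpq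
      have := h4 k1 k2 hlt
      linarith
    · exact hne heqk
    · have hw := hkey k2 k1 hgt _ _ (hzrk k2) (hzrk k1) heq.symm hpq.symm
      have := h4 k2 k1 hgt
      linarith
  have hcompR : Fintype.card F.ConnectedComponent = SA.card := by
    have h1' : (SA.image φ).card = SA.card := Finset.card_image_of_injOn hinj
    have h2' : (SA.image φ).card ≤ Fintype.card F.ConnectedComponent := by
      simpa using Finset.card_le_univ (SA.image φ)
    have h3' : Fintype.card F.ConnectedComponent ≤ R := by exact_mod_cast hcomp_le
    have h4' : SA.card = R := by exact_mod_cast hSAcard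
    omega
  have hsurj : SA.image φ = Finset.univ := by
    apply Finset.eq_univ_of_card
    rw [Finset.card_image_of_injOn hinj, hcompR]
  -- conclusion
  by_cases hc : F.connectedComponentMk ⟨r k, hyrk k⟩ = C
  · exact ⟨hyrk k, hc⟩
  exfalso
  -- some selected group ℓ has its root in C
  obtain ⟨l, hlA, hlC⟩ := Finset.mem_image.mp (hsurj ▸ Finset.mem_univ C)
  have hal : a l = 1 := (Finset.mem_filter.mp hlA).2
  have hlk : l ≠ k := fun h' => hc (h' ▸ hlC)
  have htl : (⟨t, ht⟩ : {i : V // y i = 1}) ≠ ⟨r l, hyrk l⟩ := by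
    intro h'
    have : t = r l := congrArg Subtype.val h'
    exact (hdisj k l hlk.symm).forall_ne_finset htT (this ▸ hroot l) rfl
  have hCl : F.connectedComponentMk (⟨t, ht⟩ : {i : V // y i = 1})
      = F.connectedComponentMk ⟨r l, hyrk l⟩ := htC.trans hlC.symm
  have hztk : z t k = 1 := (h8 k t htT).1
  rcases lt_trichotomy l k with hlt | heqk | hgt
  · -- l < k : a l gets killed
    have hw := hkey l k hlt _ _ (hzrk l) hztk hCl.symm htl.symm
    have := h4 l k hlt
    linarith
  · exact hlk heqk
  · -- k < l : use the component of r k and transitivity of w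
    have hwkl : 1 ≤ w k l := hkey k l hgt _ _ hztk (hzrk l) hCl htl
    obtain ⟨m, hmA, hmC2⟩ := Finset.mem_image.mp
      (hsurj ▸ Finset.mem_univ (F.connectedComponentMk ⟨r k, hyrk k⟩))
    have ham : a m = 1 := (Finset.mem_filter.mp hmA).2
    have hmk : m ≠ k := by
      intro h'
      rw [h'] at ham
      linarith [h4 k l hgt, hwkl]
    have hml : m ≠ l := by
      intro h'
      rw [h'] at hmC2
      exact hc (hmC2.symm.trans hlC)
    have hrmk : (⟨r m, hyrk m⟩ : {i : V // y i = 1}) ≠ ⟨r k, hyrk k⟩ := by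
      intro h'
      exact hroot_ne m k hmk (congrArg Subtype.val h')
    rcases lt_trichotomy m k with hmlt | hmeq | hmgt
    · -- m < k < l
      have hwmk : 1 ≤ w m k := hkey m k hmlt _ _ (hzrk m) (hzrk k) hmC2 hrmk
      have h7' := (h7 m k l hmlt hgt).1
      have := h4 m l (hmlt.trans hgt)
      linarith
    · exact hmk hmeq
    · -- k < m
      have hwkm : 1 ≤ w k m := hkey k m hmgt _ _ (hzrk k) (hzrk m) hmC2.symm hrmk.symm
      rcases lt_trichotomy m l with hml' | hml'' | hml''' 
      · have h7' := (h7 k m l hmgt hml').2.2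
        have := h4 m l hml'
        linarith
      · exact hml hml''
      · have h7' := (h7 k l m hgt hml''').2.2
        have := h4 l m hml'''
        linarith
end
end

section
/- For every instance (G, T^1,…,T^K, c) of the Steiner Forest problem, Proj_x(𝔏^{edf}) ⊆ Proj_x(𝔏^{df}); moreover there exists an instance for which the containment is strict, i.e. Proj_x(𝔏^{df}) ⊋ Proj_x(𝔏^{edf}). In other words, the extended directed flow-based formulation is stronger than the directed flow-based formulation. -/
open Finset
open scoped Classical

noncomputable section

variable {V : Type} [Fintype V] [DecidableEq V]

/-- `g(δ⁺(S))`: the value of the arc vector `g` on the arcs leaving `S`. -/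
def acutOut (g : V → V → ℝ) (S : Finset V) : ℝ :=
  ∑ i ∈ S, ∑ j ∈ Sᶜ, g i j

/-- `t ∈ 𝔗_r^{k…K} = (T^k ∪ … ∪ T^K) \ {r^k}`. -/
def memTkK {K : ℕ} (T : Fin K → Finset V) (r : Fin K → V) (k : Fin K) (t : V) : Prop :=
  (∃ l : Fin K, k ≤ l ∧ t ∈ T l) ∧ t ≠ r k

/-- The subgraph of `G` formed by the edges with `x`-value one. -/
def fromX (G : SimpleGraph V) (x : Sym2 V → ℝ) : SimpleGraph V where
  Adj i j := G.Adj i j ∧ x s(i, j) = 1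
  symm := by
    constructor
    intro i j h
    exact ⟨h.1.symm, by rw [Sym2.eq_swap]; exact h.2⟩
  loopless := by
    constructor
    intro i h
    exact G.irrefl h.1

/-- `H` is a feasible Steiner Forest of the instance `(G, T)`: a cycle-free
subgraph of `G` connecting each terminal set. -/
def IsSteinerForest (G H : SimpleGraph V) {K : ℕ} (T : Fin K → Finset V) : Prop :=
  H ≤ G ∧ H.IsAcyclic ∧ ∀ k : Fin K, ∀ s ∈ T k, ∀ t ∈ T k, H.Reachable s t

/-- Membership in the extended directed flow polytope `𝔏^{edf}`. -/
def memLedf (G : SimpleGraph V) {K : ℕ} (T : Fin K → Finset V) (r : Fin K → V)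
    (x : Sym2 V → ℝ) (xk : Fin K → Sym2 V → ℝ)
    (f : Fin K → V → V → V → ℝ) (z : Fin K → Fin K → ℝ) : Prop :=
  -- variable bounds
  (∀ e ∈ G.edgeSet, 0 ≤ x e ∧ x e ≤ 1) ∧
  (∀ k : Fin K, ∀ e ∈ G.edgeSet, 0 ≤ xk k e ∧ xk k e ≤ 1) ∧
  (∀ k l : Fin K, k ≤ l → 0 ≤ z k l ∧ z k l ≤ 1) ∧
  (∀ (k : Fin K) (t : V), memTkK T r k t →
    (∀ i j : V, ¬ G.Adj i j → f k t i j = 0) ∧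
    (∀ i j : V, 0 ≤ f k t i j ∧ f k t i j ≤ 1)) ∧
  -- (1)  x_{ij} ≥ Σ_k x^k_{ij}
  (∀ i j : V, G.Adj i j → (∑ k : Fin K, xk k s(i, j)) ≤ x s(i, j)) ∧
  -- (2)  Σ_{ℓ ≤ k} z_{ℓk} = 1
  (∀ k : Fin K, (∑ l ∈ Finset.Iic k, z l k) = 1) ∧
  -- (3)  z_{kk} ≥ z_{kℓ} for k ∈ [K] \ {1, K} and ℓ ≥ k + 1
  (∀ k l : Fin K, k.val ≠ 0 → k.val ≠ K - 1 → k < l → z k l ≤ z k k) ∧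
  -- (4)  f^{ks}_{ij} + f^{kt}_{ji} ≤ x^k_{ij}
  (∀ k : Fin K, ∀ u t : V, memTkK T r k u → memTkK T r k t →
    ∀ i j : V, G.Adj i j → f k u i j + f k t j i ≤ xk k s(i, j)) ∧
  -- (5)  flow conservation: a flow of value z_{kℓ} from r^k to each t ∈ T^ℓ
  (∀ k l : Fin K, k ≤ l → ∀ t ∈ T l, t ≠ r k → ∀ i : V,
    (∑ j, f k t j i) - (∑ j, f k t i j) =
      if i = r k then -(z k l) else if i = t then z k l else 0)

/-- All components of a point of `𝔏^{edf}` lie in `{0,1}`. -/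
def LedfIntegral (G : SimpleGraph V) {K : ℕ}
    (x : Sym2 V → ℝ) (xk : Fin K → Sym2 V → ℝ)
    (f : Fin K → V → V → V → ℝ) (z : Fin K → Fin K → ℝ) : Prop :=
  (∀ e ∈ G.edgeSet, x e = 0 ∨ x e = 1) ∧
  (∀ k : Fin K, ∀ e ∈ G.edgeSet, xk k e = 0 ∨ xk k e = 1) ∧
  (∀ (k : Fin K) (t i j : V), f k t i j = 0 ∨ f k t i j = 1) ∧
  (∀ k l : Fin K, k ≤ l → (z k l = 0 ∨ z k l = 1))

/-- Membership in the directed flow polytope `𝔏^{df}`. -/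
def memLdf (G : SimpleGraph V) {K : ℕ} (T : Fin K → Finset V) (r : Fin K → V)
    (x : Sym2 V → ℝ) (f : V → V → V → ℝ) : Prop :=
  (∀ e ∈ G.edgeSet, 0 ≤ x e ∧ x e ≤ 1) ∧
  (∀ k : Fin K, ∀ t ∈ T k, t ≠ r k →
    (∀ i j : V, ¬ G.Adj i j → f t i j = 0) ∧
    (∀ i j : V, 0 ≤ f t i j ∧ f t i j ≤ 1) ∧
    (∀ i : V, (∑ j, f t i j) - (∑ j, f t j i) =
        (if i = r k then 1 else 0) - (if i = t then 1 else 0))) ∧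
  (∀ k : Fin K, ∀ u ∈ T k, u ≠ r k → ∀ t ∈ T k, t ≠ r k →
    ∀ i j : V, G.Adj i j →
      0 ≤ f u i j + f t j i ∧ f u i j + f t j i ≤ x s(i, j))


lemma max_add_max_le {p q c : ℝ} (hpq : p + q ≤ c) (hp : p ≤ c) (hq : q ≤ c) (hc : 0 ≤ c) :
    max p 0 + max q 0 ≤ c := by
  rcases max_cases p 0 with ⟨h1, _⟩ | ⟨h1, _⟩ <;> rcases max_cases q 0 with ⟨h3, _⟩ | ⟨h3, _⟩ <;>
    rw [h1, h3] <;> linarith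

lemma max_sub_max_neg (p : ℝ) : max p 0 - max (-p) 0 = p := by
  rcases le_total p 0 with h | h
  · rw [max_eq_right h, max_eq_left (by linarith : (0:ℝ) ≤ -p)]; ring
  · rw [max_eq_left h, max_eq_right (by linarith : -p ≤ (0:ℝ))]; ring

lemma ledf_subset_ldf (G : SimpleGraph V) (K : ℕ)
    (T : Fin K → Finset V) (r : Fin K → V)
    (hroot : ∀ k, r k ∈ T k) (hdisj : ∀ k l : Fin K, k ≠ l → Disjoint (T k) (T l))
    {x : Sym2 V → ℝ} {xk : Fin K → Sym2 V → ℝ} {f : Fin K → V → V → V → ℝ}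
    {z : Fin K → Fin K → ℝ} (h : memLedf G T r x xk f z) :
    ∃ f', memLdf G T r x f' := by
  obtain ⟨hx, hxk, hz, hf, h1, h2, h3, h4, h5⟩ := h
  set F : V → V → V → ℝ := fun t i j =>
    if h : ∃ l : Fin K, t ∈ T l then
      f h.choose t i j + ∑ k ∈ Finset.Iio h.choose,
        max (f k t i j + f k (r h.choose) j i - f k t j i - f k (r h.choose) i j) 0
    else 0 with hFdef
  -- helper: value of F for a terminal t ∈ T ℓ
  have hchoose : ∀ (ℓ : Fin K) (t : V), t ∈ T ℓ → ∀ (h : ∃ l : Fin K, t ∈ T l), h.choose = ℓ := by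
    intro ℓ t ht h
    by_contra hne
    exact Finset.disjoint_left.mp (hdisj _ _ hne) h.choose_spec ht
  have hFt : ∀ (ℓ : Fin K) (t : V), t ∈ T ℓ → ∀ i j : V,
      F t i j = f ℓ t i j + ∑ k ∈ Finset.Iio ℓ,
        max (f k t i j + f k (r ℓ) j i - f k t j i - f k (r ℓ) i j) 0 := by
    intro ℓ t ht i j
    have hex : ∃ l : Fin K, t ∈ T l := ⟨ℓ, ht⟩
    simp only [hFdef, dif_pos hex, hchoose ℓ t ht hex]
  -- membership facts
  have hmt : ∀ (ℓ : Fin K) (t : V), t ∈ T ℓ → t ≠ r ℓ → ∀ k : Fin K, k ≤ ℓ → memTkK T r k t := by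
    intro ℓ t ht htne k hk
    refine ⟨⟨ℓ, hk, ht⟩, fun habs => ?_⟩
    rcases eq_or_ne k ℓ with rfl | hne
    · exact htne habs
    · exact Finset.disjoint_left.mp (hdisj k ℓ hne) (habs ▸ hroot k) ht
  have hmr : ∀ (ℓ : Fin K), ∀ k : Fin K, k < ℓ → memTkK T r k (r ℓ) := by
    intro ℓ k hk
    refine ⟨⟨ℓ, hk.le, hroot ℓ⟩, fun habs => ?_⟩
    exact Finset.disjoint_left.mp (hdisj k ℓ hk.ne) (habs ▸ hroot k) (hroot ℓ)
  -- capacity bound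
  have hcap : ∀ (ℓ : Fin K) (u : V), u ∈ T ℓ → u ≠ r ℓ → ∀ (t : V), t ∈ T ℓ → t ≠ r ℓ →
      ∀ i j : V, G.Adj i j → F u i j + F t j i ≤ x s(i, j) := by
    intro ℓ u hu hune t ht htne i j hadj
    have he : s(i, j) ∈ G.edgeSet := by rwa [SimpleGraph.mem_edgeSet]
    rw [hFt ℓ u hu i j, hFt ℓ t ht j i]
    have hsji : (s(j, i) : Sym2 V) = s(i, j) := Sym2.eq_swap
    have key : ∀ k ∈ Finset.Iio ℓ,
        max (f k u i j + f k (r ℓ) j i - f k u j i - f k (r ℓ) i j) 0 +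
        max (f k t j i + f k (r ℓ) i j - f k t i j - f k (r ℓ) j i) 0 ≤ xk k s(i, j) := by
      intro k hk
      rw [Finset.mem_Iio] at hk
      have hA := h4 k u (r ℓ) (hmt ℓ u hu hune k hk.le) (hmr ℓ k hk) i j hadj
      have hB := h4 k (r ℓ) t (hmr ℓ k hk) (hmt ℓ t ht htne k hk.le) i j hadj
      have hC := h4 k u t (hmt ℓ u hu hune k hk.le) (hmt ℓ t ht htne k hk.le) i j hadj
      have n1 := ((hf k u (hmt ℓ u hu hune k hk.le)).2 j i).1
      have n2 := ((hf k t (hmt ℓ t ht htne k hk.le)).2 i j).1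
      have n3 := ((hf k (r ℓ) (hmr ℓ k hk)).2 i j).1
      have n4 := ((hf k (r ℓ) (hmr ℓ k hk)).2 j i).1
      have n5 := ((hf k u (hmt ℓ u hu hune k hk.le)).2 i j).1
      have n6 := ((hf k t (hmt ℓ t ht htne k hk.le)).2 j i).1
      exact max_add_max_le (by linarith) (by linarith) (by linarith) (by linarith)
    have hCl := h4 ℓ u t (hmt ℓ u hu hune ℓ le_rfl) (hmt ℓ t ht htne ℓ le_rfl) i j hadj
    have hsum : xk ℓ s(i, j) + ∑ k ∈ Finset.Iio ℓ, xk k s(i, j) ≤ ∑ k : Fin K, xk k s(i, j) := by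
      have h0 : ∑ k ∈ insert ℓ (Finset.Iio ℓ), xk k s(i, j) ≤ ∑ k : Fin K, xk k s(i, j) :=
        Finset.sum_le_sum_of_subset_of_nonneg (Finset.subset_univ _)
          (fun k _ _ => (hxk k s(i, j) he).1)
      rwa [Finset.sum_insert (by simp)] at h0
    have h1' := h1 i j hadj
    have hle := Finset.sum_le_sum key
    rw [Finset.sum_add_distrib] at hle
    linarith
  -- nonnegativity
  have hnn : ∀ (ℓ : Fin K) (t : V), t ∈ T ℓ → t ≠ r ℓ → ∀ i j : V, 0 ≤ F t i j := by
    intro ℓ t ht htne i j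
    rw [hFt ℓ t ht i j]
    have := ((hf ℓ t (hmt ℓ t ht htne ℓ le_rfl)).2 i j).1
    have hs : (0:ℝ) ≤ ∑ k ∈ Finset.Iio ℓ,
        max (f k t i j + f k (r ℓ) j i - f k t j i - f k (r ℓ) i j) 0 :=
      Finset.sum_nonneg fun _ _ => le_max_right _ 0
    linarith
  refine ⟨F, hx, ?_, ?_⟩
  · -- per-terminal conditions
    intro ℓ t ht htne
    refine ⟨?_, ?_, ?_⟩
    · intro i j hnadj
      rw [hFt ℓ t ht i j]
      have hnadj' : ¬ G.Adj j i := fun h => hnadj h.symm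
      have z1 := (hf ℓ t (hmt ℓ t ht htne ℓ le_rfl)).1 i j hnadj
      rw [z1, Finset.sum_eq_zero, add_zero]
      intro k hk
      rw [Finset.mem_Iio] at hk
      rw [(hf k t (hmt ℓ t ht htne k hk.le)).1 i j hnadj,
        (hf k t (hmt ℓ t ht htne k hk.le)).1 j i hnadj',
        (hf k (r ℓ) (hmr ℓ k hk)).1 i j hnadj,
        (hf k (r ℓ) (hmr ℓ k hk)).1 j i hnadj']
      simp
    · intro i j
      refine ⟨hnn ℓ t ht htne i j, ?_⟩
      by_cases hadj : G.Adj i j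
      · have hc := hcap ℓ t ht htne t ht htne i j hadj
        have h2' := hnn ℓ t ht htne j i
        have hxb := (hx s(i, j) (by rwa [SimpleGraph.mem_edgeSet])).2
        linarith
      · have : F t i j = 0 := by
          rw [hFt ℓ t ht i j]
          have hnadj' : ¬ G.Adj j i := fun h => hadj h.symm
          rw [(hf ℓ t (hmt ℓ t ht htne ℓ le_rfl)).1 i j hadj, Finset.sum_eq_zero, add_zero]
          intro k hk
          rw [Finset.mem_Iio] at hk
          rw [(hf k t (hmt ℓ t ht htne k hk.le)).1 i j hadj,
            (hf k t (hmt ℓ t ht htne k hk.le)).1 j i hnadj',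
            (hf k (r ℓ) (hmr ℓ k hk)).1 i j hadj,
            (hf k (r ℓ) (hmr ℓ k hk)).1 j i hnadj']
          simp
        rw [this]; norm_num
    · -- conservation
      intro i
      have point : ∀ j : V, F t i j - F t j i = (f ℓ t i j - f ℓ t j i) +
          ∑ k ∈ Finset.Iio ℓ, (f k t i j + f k (r ℓ) j i - f k t j i - f k (r ℓ) i j) := by
        intro j
        rw [hFt ℓ t ht i j, hFt ℓ t ht j i,
          show ∀ a b S1 S2 : ℝ, (a + S1) - (b + S2) = (a - b) + (S1 - S2) from
            fun a b S1 S2 => by ring,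
          ← Finset.sum_sub_distrib]
        congr 1
        refine Finset.sum_congr rfl fun k _ => ?_
        have hms := max_sub_max_neg (f k t i j + f k (r ℓ) j i - f k t j i - f k (r ℓ) i j)
        rw [show -(f k t i j + f k (r ℓ) j i - f k t j i - f k (r ℓ) i j) =
          f k t j i + f k (r ℓ) i j - f k t i j - f k (r ℓ) j i from by ring] at hms
        exact hms
      have expand : (∑ j, F t i j) - (∑ j, F t j i) =
          ((∑ j, f ℓ t i j) - (∑ j, f ℓ t j i)) + ∑ k ∈ Finset.Iio ℓ,
            (((∑ j, f k t i j) - (∑ j, f k t j i)) +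
             ((∑ j, f k (r ℓ) j i) - (∑ j, f k (r ℓ) i j))) := by
        rw [← Finset.sum_sub_distrib, Finset.sum_congr rfl fun j _ => point j,
          Finset.sum_add_distrib, Finset.sum_sub_distrib, Finset.sum_comm]
        congr 1
        refine Finset.sum_congr rfl fun k _ => ?_
        simp only [Finset.sum_sub_distrib, Finset.sum_add_distrib]
        ring
      have ht5 : ∀ k : Fin K, k ≤ ℓ → (∑ j, f k t j i) - (∑ j, f k t i j) =
          (if i = r k then -(z k ℓ) else if i = t then z k ℓ else 0) :=
        fun k hk => h5 k ℓ hk t ht (hmt ℓ t ht htne k hk).2 i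
      have hr5 : ∀ k : Fin K, k < ℓ → (∑ j, f k (r ℓ) j i) - (∑ j, f k (r ℓ) i j) =
          (if i = r k then -(z k ℓ) else if i = r ℓ then z k ℓ else 0) :=
        fun k hk => h5 k ℓ hk.le (r ℓ) (hroot ℓ) (hmr ℓ k hk).2 i
      have hIic : (∑ k ∈ Finset.Iio ℓ, z k ℓ) + z ℓ ℓ = 1 := by
        have h2l := h2 ℓ
        rw [← Finset.Iio_insert, Finset.sum_insert (by simp)] at h2l
        linarith
      rw [expand]
      have hterm : ∀ k : Fin K, k ∈ Finset.Iio ℓ →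
          ((∑ j, f k t i j) - (∑ j, f k t j i)) +
             ((∑ j, f k (r ℓ) j i) - (∑ j, f k (r ℓ) i j)) =
          -(if i = r k then -(z k ℓ) else if i = t then z k ℓ else 0) +
            (if i = r k then -(z k ℓ) else if i = r ℓ then z k ℓ else 0) := by
        intro k hk
        rw [Finset.mem_Iio] at hk
        rw [show (∑ j, f k t i j) - (∑ j, f k t j i) =
          -((∑ j, f k t j i) - (∑ j, f k t i j)) from by ring, ht5 k hk.le, hr5 k hk]
      rw [Finset.sum_congr rfl hterm,
        show (∑ j, f ℓ t i j) - (∑ j, f ℓ t j i) =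
          -((∑ j, f ℓ t j i) - (∑ j, f ℓ t i j)) from by ring, ht5 ℓ le_rfl]
      by_cases hirl : i = r ℓ
      · have hsc : ∀ k : Fin K, k ∈ Finset.Iio ℓ →
            (-(if i = r k then -(z k ℓ) else if i = t then z k ℓ else 0) +
            (if i = r k then -(z k ℓ) else if i = r ℓ then z k ℓ else 0)) = z k ℓ := by
          intro k hk
          rw [Finset.mem_Iio] at hk
          rw [if_neg (fun h => (hmr ℓ k hk).2 (hirl.symm.trans h)),
            if_neg (fun h => (hmr ℓ k hk).2 (hirl.symm.trans h)),
            if_neg (fun h => htne (h.symm.trans hirl)), if_pos hirl]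
          ring
        rw [Finset.sum_congr rfl hsc, if_pos hirl, if_pos hirl,
          if_neg (fun h => htne (h.symm.trans hirl))]
        linarith
      · by_cases hit : i = t
        · have hsc : ∀ k : Fin K, k ∈ Finset.Iio ℓ →
              (-(if i = r k then -(z k ℓ) else if i = t then z k ℓ else 0) +
              (if i = r k then -(z k ℓ) else if i = r ℓ then z k ℓ else 0)) = -(z k ℓ) := by
            intro k hk
            rw [Finset.mem_Iio] at hk
            rw [if_neg (fun h => (hmt ℓ t ht htne k hk.le).2 (hit.symm.trans h)),
              if_neg (fun h => (hmt ℓ t ht htne k hk.le).2 (hit.symm.trans h)),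
              if_pos hit, if_neg hirl]
            ring
          rw [Finset.sum_congr rfl hsc,
            if_neg (fun h => (hmt ℓ t ht htne ℓ le_rfl).2 (hit.symm.trans h)), if_pos hit,
            if_neg hirl, if_pos hit, Finset.sum_neg_distrib]
          linarith
        · have hsc : ∀ k : Fin K, k ∈ Finset.Iio ℓ →
              (-(if i = r k then -(z k ℓ) else if i = t then z k ℓ else 0) +
              (if i = r k then -(z k ℓ) else if i = r ℓ then z k ℓ else 0)) = 0 := by
            intro k _
            by_cases hik : i = r k
            · rw [if_pos hik, if_pos hik]; ring
            · rw [if_neg hik, if_neg hik, if_neg hit, if_neg hirl]; ring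
          rw [Finset.sum_congr rfl hsc, Finset.sum_const_zero, if_neg hirl, if_neg hirl,
            if_neg hit, if_neg hit]
          ring
  · intro k u hu hune t ht htne i j hadj
    exact ⟨by have := hnn k u hu hune i j; have := hnn k t ht htne j i; linarith,
      hcap k u hu hune t ht htne i j hadj⟩

/-- The 4-cycle 0–1–2–3–0. -/
def Gex : SimpleGraph (Fin 4) where
  Adj i j := (i.val + j.val) % 2 = 1
  symm := ⟨fun i j h => by simpa [Nat.add_comm] using h⟩
  loopless := ⟨fun i h => by omega⟩

instance : DecidableRel Gex.Adj := fun i j => Nat.decEq ((i.val + j.val) % 2) 1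

def Tex : Fin 2 → Finset (Fin 4) := ![{0, 2}, {1, 3}]

lemma fin2_cases (k : Fin 2) : k = 0 ∨ k = 1 := by omega

lemma fin4_cases (i : Fin 4) : i = 0 ∨ i = 1 ∨ i = 2 ∨ i = 3 := by omega

def rex : Fin 2 → Fin 4 := ![0, 1]

def g2 : Fin 4 → Fin 4 → ℝ :=
  ![![0, 1/2, 0, 1/2], ![0, 0, 1/2, 0], ![0, 0, 0, 0], ![0, 0, 1/2, 0]]

def g3 : Fin 4 → Fin 4 → ℝ :=
  ![![0, 0, 0, 1/2], ![1/2, 0, 1/2, 0], ![0, 0, 0, 1/2], ![0, 0, 0, 0]]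

def fdf : Fin 4 → Fin 4 → Fin 4 → ℝ :=
  fun t => if t = 2 then g2 else if t = 3 then g3 else fun _ _ => 0

lemma fdf_mem_ldf : memLdf Gex Tex rex (fun _ => (1/2 : ℝ)) fdf := by
  refine ⟨fun e _ => by norm_num, ?_, ?_⟩
  · intro k t ht htne
    rcases fin2_cases k with rfl | rfl
    · simp only [Tex, Matrix.cons_val_zero, Finset.mem_insert, Finset.mem_singleton] at ht
      rcases ht with rfl | rfl
      · exact absurd (by decide : (0 : Fin 4) = rex 0) htne
      · refine ⟨?_, ?_, ?_⟩
        · intro i j h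
          rcases fin4_cases i with rfl | rfl | rfl | rfl <;> rcases fin4_cases j with rfl | rfl | rfl | rfl <;>
            first
              | exact absurd (by decide) h
              | simp (config := { decide := true }) [fdf, g2, Fin.ext_iff, Matrix.vecHead, Matrix.vecTail] <;> norm_num
        · intro i j
          rcases fin4_cases i with rfl | rfl | rfl | rfl <;> rcases fin4_cases j with rfl | rfl | rfl | rfl <;> simp (config := { decide := true }) [fdf, g2, Fin.ext_iff, Matrix.vecHead, Matrix.vecTail] <;> norm_num
        · intro i
          rcases fin4_cases i with rfl | rfl | rfl | rfl <;>
            · rw [Fin.sum_univ_four, Fin.sum_univ_four]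
              simp (config := { decide := true }) [fdf, g2, Fin.ext_iff, rex, Matrix.vecHead, Matrix.vecTail] <;> norm_num
    · simp only [Tex, Matrix.cons_val_one, Matrix.cons_val_zero, Matrix.head_cons, Finset.mem_insert,
        Finset.mem_singleton] at ht
      rcases ht with rfl | rfl
      · exact absurd (by decide : (1 : Fin 4) = rex 1) htne
      · refine ⟨?_, ?_, ?_⟩
        · intro i j h
          rcases fin4_cases i with rfl | rfl | rfl | rfl <;> rcases fin4_cases j with rfl | rfl | rfl | rfl <;>
            first
              | exact absurd (by decide) h
              | simp (config := { decide := true }) [fdf, g3, Fin.ext_iff, Matrix.vecHead, Matrix.vecTail] <;> norm_num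
        · intro i j
          rcases fin4_cases i with rfl | rfl | rfl | rfl <;> rcases fin4_cases j with rfl | rfl | rfl | rfl <;> simp (config := { decide := true }) [fdf, g3, Fin.ext_iff, Matrix.vecHead, Matrix.vecTail] <;> norm_num
        · intro i
          rcases fin4_cases i with rfl | rfl | rfl | rfl <;>
            · rw [Fin.sum_univ_four, Fin.sum_univ_four]
              simp (config := { decide := true }) [fdf, g3, Fin.ext_iff, rex, Matrix.vecHead, Matrix.vecTail] <;> norm_num
  · intro k u hu hune t ht htne i j hadj
    rcases fin2_cases k with rfl | rfl
    · simp only [Tex, Matrix.cons_val_zero, Finset.mem_insert, Finset.mem_singleton] at hu ht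
      rcases hu with rfl | rfl
      · exact absurd (by decide : (0 : Fin 4) = rex 0) hune
      rcases ht with rfl | rfl
      · exact absurd (by decide : (0 : Fin 4) = rex 0) htne
      rcases fin4_cases i with rfl | rfl | rfl | rfl <;> rcases fin4_cases j with rfl | rfl | rfl | rfl <;> simp (config := { decide := true }) [fdf, g2, Fin.ext_iff, Matrix.vecHead, Matrix.vecTail] <;> norm_num
    · simp only [Tex, Matrix.cons_val_one, Matrix.cons_val_zero, Matrix.head_cons, Finset.mem_insert,
        Finset.mem_singleton] at hu ht
      rcases hu with rfl | rfl
      · exact absurd (by decide : (1 : Fin 4) = rex 1) hune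
      rcases ht with rfl | rfl
      · exact absurd (by decide : (1 : Fin 4) = rex 1) htne
      rcases fin4_cases i with rfl | rfl | rfl | rfl <;> rcases fin4_cases j with rfl | rfl | rfl | rfl <;> simp (config := { decide := true }) [fdf, g3, Fin.ext_iff, Matrix.vecHead, Matrix.vecTail] <;> norm_num

lemma m02ex : memTkK Tex rex 0 2 := ⟨⟨0, le_rfl, by decide⟩, by decide⟩
lemma m03ex : memTkK Tex rex 0 3 := ⟨⟨1, by decide, by decide⟩, by decide⟩
lemma m13ex : memTkK Tex rex 1 3 := ⟨⟨1, le_rfl, by decide⟩, by decide⟩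

lemma not_mem_ledf (xk : Fin 2 → Sym2 (Fin 4) → ℝ) (f : Fin 2 → Fin 4 → Fin 4 → Fin 4 → ℝ)
    (z : Fin 2 → Fin 2 → ℝ) : ¬ memLedf Gex Tex rex (fun _ => (1/2 : ℝ)) xk f z := by
  rintro ⟨hx, hxk, hz, hf, h1, h2, h3, h4, h5⟩
  have hadj01 : Gex.Adj 0 1 := by decide
  have hadj03 : Gex.Adj 0 3 := by decide
  have hadj12 : Gex.Adj 1 2 := by decide
  have hadj23 : Gex.Adj 2 3 := by decide
  have hadj32 : Gex.Adj 3 2 := by decide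
  have he01 : (s(0, 1) : Sym2 (Fin 4)) ∈ Gex.edgeSet := Gex.mem_edgeSet.mpr hadj01
  have he03 : (s(0, 3) : Sym2 (Fin 4)) ∈ Gex.edgeSet := Gex.mem_edgeSet.mpr hadj03
  have he12 : (s(1, 2) : Sym2 (Fin 4)) ∈ Gex.edgeSet := Gex.mem_edgeSet.mpr hadj12
  have he23 : (s(2, 3) : Sym2 (Fin 4)) ∈ Gex.edgeSet := Gex.mem_edgeSet.mpr hadj23
  -- z facts
  have hz00 : z 0 0 = 1 := by
    have h := h2 0
    rwa [show Finset.Iic (0 : Fin 2) = {0} from by decide, Finset.sum_singleton] at h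
  have hz011 : z 0 1 + z 1 1 = 1 := by
    have h := h2 1
    rwa [show Finset.Iic (1 : Fin 2) = {0, 1} from by decide,
      Finset.sum_pair (by decide : (0 : Fin 2) ≠ 1)] at h
  have hz11nn : 0 ≤ z 1 1 := (hz 1 1 le_rfl).1
  -- flow bound facts
  have hf02 := hf 0 2 m02ex
  have hf03 := hf 0 3 m03ex
  have hf13 := hf 1 3 m13ex
  -- conservation facts
  have C1 := h5 0 0 le_rfl 2 (by decide) (by decide) 0
  rw [Fin.sum_univ_four, Fin.sum_univ_four, show rex 0 = 0 from rfl, if_pos rfl] at C1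
  have C2 := h5 0 0 le_rfl 2 (by decide) (by decide) 2
  rw [Fin.sum_univ_four, Fin.sum_univ_four, show rex 0 = 0 from rfl,
    if_neg (by decide : ¬(2 : Fin 4) = 0), if_pos rfl] at C2
  have C3 := h5 1 1 le_rfl 3 (by decide) (by decide) 1
  rw [Fin.sum_univ_four, Fin.sum_univ_four, show rex 1 = 1 from rfl, if_pos rfl] at C3
  have C4 := h5 0 1 (by decide) 3 (by decide) (by decide) 0
  rw [Fin.sum_univ_four, Fin.sum_univ_four, show rex 0 = 0 from rfl, if_pos rfl] at C4
  have C5 := h5 0 1 (by decide) 3 (by decide) (by decide) 3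
  rw [Fin.sum_univ_four, Fin.sum_univ_four, show rex 0 = 0 from rfl,
    if_neg (by decide : ¬(3 : Fin 4) = 0), if_pos rfl] at C5
  -- zero values on non-adjacent arcs
  have z1 : f 0 2 0 0 = 0 := hf02.1 0 0 (by decide)
  have z2 : f 0 2 0 2 = 0 := hf02.1 0 2 (by decide)
  have z3 : f 0 2 2 0 = 0 := hf02.1 2 0 (by decide)
  have z4 : f 0 2 2 2 = 0 := hf02.1 2 2 (by decide)
  have z5 : f 0 3 0 0 = 0 := hf03.1 0 0 (by decide)
  have z6 : f 0 3 0 2 = 0 := hf03.1 0 2 (by decide)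
  have z7 : f 0 3 2 0 = 0 := hf03.1 2 0 (by decide)
  have z8 : f 0 3 3 3 = 0 := hf03.1 3 3 (by decide)
  have z9 : f 0 3 1 3 = 0 := hf03.1 1 3 (by decide)
  have z10 : f 0 3 3 1 = 0 := hf03.1 3 1 (by decide)
  have z11 : f 1 3 1 1 = 0 := hf13.1 1 1 (by decide)
  have z12 : f 1 3 3 1 = 0 := hf13.1 3 1 (by decide)
  have z13 : f 1 3 1 3 = 0 := hf13.1 1 3 (by decide)
  -- capacity facts
  have P1 := h4 0 2 2 m02ex m02ex 0 1 hadj01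
  have P2 := h4 0 2 2 m02ex m02ex 0 3 hadj03
  have P3 := h4 0 2 2 m02ex m02ex 1 2 hadj12
  have P4 := h4 0 2 2 m02ex m02ex 2 3 hadj23
  have P5 := h4 0 3 3 m03ex m03ex 0 1 hadj01
  have P6 := h4 0 3 3 m03ex m03ex 0 3 hadj03
  have P7 := h4 0 3 3 m03ex m03ex 2 3 hadj23
  have P9 := h4 0 2 3 m02ex m03ex 3 2 hadj32
  rw [show (s(3, 2) : Sym2 (Fin 4)) = s(2, 3) from Sym2.eq_swap] at P9
  have P10 := h4 1 3 3 m13ex m13ex 0 1 hadj01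
  have P11 := h4 1 3 3 m13ex m13ex 1 2 hadj12
  -- edge capacity sums
  have Q1 := h1 0 1 hadj01
  have Q2 := h1 0 3 hadj03
  have Q3 := h1 1 2 hadj12
  have Q4 := h1 2 3 hadj23
  simp only [Fin.sum_univ_two] at Q1 Q2 Q3 Q4
  norm_num at Q1 Q2 Q3 Q4
  -- nonnegativity of capacities
  have N1 := (hxk 0 _ he01).1
  have N2 := (hxk 0 _ he03).1
  have N3 := (hxk 0 _ he12).1
  have N4 := (hxk 0 _ he23).1
  have N5 := (hxk 1 _ he01).1
  have N6 := (hxk 1 _ he03).1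
  have N7 := (hxk 1 _ he12).1
  have N8 := (hxk 1 _ he23).1
  -- nonnegativity of flows
  have F1 := (hf02.2 1 0).1
  have F2 := (hf02.2 3 0).1
  have F3 := (hf02.2 0 1).1
  have F4 := (hf02.2 0 3).1
  have F5 := (hf02.2 1 2).1
  have F6 := (hf02.2 2 1).1
  have F7 := (hf02.2 2 3).1
  have F8 := (hf02.2 3 2).1
  have F9 := (hf03.2 1 0).1
  have F10 := (hf03.2 3 0).1
  have F11 := (hf03.2 0 1).1
  have F12 := (hf03.2 0 3).1
  have F13 := (hf03.2 1 2).1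
  have F14 := (hf03.2 2 1).1
  have F15 := (hf03.2 2 3).1
  have F16 := (hf03.2 3 2).1
  have F17 := (hf13.2 0 1).1
  have F18 := (hf13.2 1 0).1
  have F19 := (hf13.2 1 2).1
  have F20 := (hf13.2 2 1).1
  linarith

/-- For every Steiner Forest instance
`Proj_x(𝔏^{edf}) ⊆ Proj_x(𝔏^{df})`, and there is an instance where the
containment is strict: the extended directed flow formulation is stronger. -/
theorem proj_Ledf_subset_proj_Ldf_and_exists_strict :
    (∀ (V : Type) [Fintype V] [DecidableEq V] (G : SimpleGraph V) (K : ℕ)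
        (T : Fin K → Finset V) (r : Fin K → V),
      (∀ k, r k ∈ T k) → (∀ k l : Fin K, k ≠ l → Disjoint (T k) (T l)) →
      {x : Sym2 V → ℝ | ∃ xk f z, memLedf G T r x xk f z} ⊆
        {x : Sym2 V → ℝ | ∃ f, memLdf G T r x f}) ∧
    (∃ (n : ℕ) (G : SimpleGraph (Fin n)) (K : ℕ)
        (T : Fin K → Finset (Fin n)) (r : Fin K → Fin n),
      (∀ k, r k ∈ T k) ∧ (∀ k l : Fin K, k ≠ l → Disjoint (T k) (T l)) ∧
      {x : Sym2 (Fin n) → ℝ | ∃ xk f z, memLedf G T r x xk f z} ⊂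
        {x : Sym2 (Fin n) → ℝ | ∃ f, memLdf G T r x f}) := by
  have main : ∀ (V : Type) [Fintype V] [DecidableEq V] (G : SimpleGraph V) (K : ℕ)
      (T : Fin K → Finset V) (r : Fin K → V),
      (∀ k, r k ∈ T k) → (∀ k l : Fin K, k ≠ l → Disjoint (T k) (T l)) →
      {x : Sym2 V → ℝ | ∃ xk f z, memLedf G T r x xk f z} ⊆
        {x : Sym2 V → ℝ | ∃ f, memLdf G T r x f} := by
    intro V _ _ G K T r hroot hdisj x hxm
    obtain ⟨xk, f, z, h⟩ := hxm
    exact ledf_subset_ldf G K T r hroot hdisj h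
  refine ⟨main, 4, Gex, 2, Tex, rex, by decide, by decide, ?_⟩
  have hroot : ∀ k, rex k ∈ Tex k := by decide
  have hdisj : ∀ k l : Fin 2, k ≠ l → Disjoint (Tex k) (Tex l) := by decide
  rw [Set.ssubset_iff_of_subset (main (Fin 4) Gex 2 Tex rex hroot hdisj)]
  exact ⟨fun _ => (1/2 : ℝ), ⟨fdf, fdf_mem_ldf⟩,
    fun ⟨xk, f, z, h⟩ => not_mem_ledf xk f z h⟩
end
end
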